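/- Let n ≥ 1 be a natural number and δ ∈ (0,n). There exists a constant C > 0, depending only on n and δ, with the following property: for every continuous function f : (0,1] → ℝ satisfying |f(t)| ≤ t^δ for all t ∈ (0,1], there exists a twice continuously differentiable function u : (0,1] → ℝ such that u(1) = 0, −t²·u''(t) + (n−1)·t·u'(t) = f(t) for all t ∈ (0,1), and |u(t)| ≤ C·t^δ for all t ∈ (0,1]. -/

import Mathlib

open MeasureTheory intervalIntegral Set Filter Topology
open scoped Interval

/-!
Since `-t² u'' + (n-1) t u' = -t^(n+1) (t^(1-n) u')'`, the equation is solved by two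
quadratures. First `F(t) = ∫_t^1 f(r) r^(-n-1) dr = O(t^(δ-n))`, which uses `δ < n`. Then
`u(t) = ∫_0^t s^(n-1) F(s) ds - L t^n`; the integral converges and is `O(t^δ)` because `δ > 0`,
the constant `L = ∫_0^1 s^(n-1) F` forces `u(1) = 0`, and `L t^n = O(t^δ)` again because
`δ < n`.
-/

lemma ContinuousOn.comp_min_right {f : ℝ → ℝ} {a b : ℝ} (hf : ContinuousOn f (Ioc a b))
    (hab : a < b) : ContinuousOn (fun t => f (min t b)) (Ioi a) :=
  hf.comp (continuous_id.min continuous_const).continuousOn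
    fun _ ht => ⟨lt_min ht hab, min_le_right _ _⟩

lemma contDiffOn_succ_of_hasDerivAt {s : Set ℝ} {u u' : ℝ → ℝ} {m : ℕ} (hs : IsOpen s)
    (hu : ∀ x ∈ s, HasDerivAt u (u' x) x) (hu' : ContDiffOn ℝ m u' s) :
    ContDiffOn ℝ (m + 1) u s := by
  rw [contDiffOn_succ_iff_deriv_of_isOpen hs]
  exact ⟨fun x hx => (hu x hx).differentiableAt.differentiableWithinAt, by simp,
    hu'.congr fun x hx => (hu x hx).deriv⟩

lemma neg_sq_mul_deriv_deriv_add_eq {u w : ℝ → ℝ} {w' t : ℝ} (k : ℕ)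
    (hu : ∀ᶠ x in 𝓝 t, HasDerivAt u (x ^ k * w x) x) (hw : HasDerivAt w w' t) :
    -t ^ 2 * deriv (deriv u) t + k * t * deriv u t = -t ^ (k + 2) * w' := by
  have hdu : deriv u =ᶠ[𝓝 t] fun x => x ^ k * w x := hu.mono fun x hx => hx.deriv
  rw [hdu.deriv_eq, hdu.eq_of_nhds,
    show deriv (fun x => x ^ k * w x) t = _ from ((hasDerivAt_pow k t).mul hw).deriv]
  rcases k with _ | k
  · simp
  · push_cast; ring

lemma abs_integral_le_rpow_of_neg {g : ℝ → ℝ} {β t : ℝ} (hβ : β < 0) (ht : 0 < t) (ht1 : t ≤ 1)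
    (hg : ∀ r ∈ Ioc t 1, |g r| ≤ r ^ (β - 1)) :
    |∫ r in t..1, g r| ≤ t ^ β / -β := by
  have h0 : (0 : ℝ) ∉ [[t, 1]] := by rw [uIcc_of_le ht1]; exact fun h => (not_le.2 ht) h.1
  calc |∫ r in t..1, g r| ≤ ∫ r in t..1, r ^ (β - 1) :=
        norm_integral_le_of_norm_le (f := g) ht1 (ae_of_all _ hg)
          (intervalIntegrable_rpow (Or.inr h0))
    _ = (t ^ β - 1) / -β := by
        rw [integral_rpow (Or.inr ⟨by linarith, h0⟩), sub_add_cancel, Real.one_rpow,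
          div_neg, ← neg_div, neg_sub]
    _ ≤ t ^ β / -β := div_le_div_of_nonneg_right (by linarith) (by linarith)

lemma intervalIntegrable_of_abs_le_rpow {h : ℝ → ℝ} {β C t : ℝ} (hβ : 0 < β) (ht : 0 ≤ t)
    (hc : ContinuousOn h (Ioc 0 t)) (hh : ∀ s ∈ Ioc 0 t, |h s| ≤ C * s ^ (β - 1)) :
    IntervalIntegrable h volume 0 t := by
  refine ((intervalIntegrable_rpow' (r := β - 1) (by linarith)).const_mul C).mono_fun' ?_ ?_
  · rw [uIoc_of_le ht]; exact hc.aestronglyMeasurable measurableSet_Ioc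
  · rw [uIoc_of_le ht, EventuallyLE, ae_restrict_iff' measurableSet_Ioc]
    exact ae_of_all _ hh

lemma abs_integral_le_rpow_of_pos {h : ℝ → ℝ} {β C t : ℝ} (hβ : 0 < β) (ht : 0 ≤ t)
    (hh : ∀ s ∈ Ioc 0 t, |h s| ≤ C * s ^ (β - 1)) :
    |∫ s in 0..t, h s| ≤ C * t ^ β / β := by
  calc |∫ s in 0..t, h s| ≤ ∫ s in 0..t, C * s ^ (β - 1) :=
        norm_integral_le_of_norm_le (f := h) ht (ae_of_all _ hh)
          ((intervalIntegrable_rpow' (r := β - 1) (by linarith)).const_mul C)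
    _ = C * t ^ β / β := by
        rw [intervalIntegral.integral_const_mul, integral_rpow (Or.inl (by linarith)),
          sub_add_cancel, Real.zero_rpow hβ.ne', sub_zero, mul_div_assoc]

/- The index `k` stands for `n - 1`, which avoids truncated subtraction in the exponents. -/
noncomputable def radialPrimitive (k : ℕ) (f : ℝ → ℝ) (t : ℝ) : ℝ :=
  ∫ r in t..1, f r / r ^ (k + 2)

noncomputable def radialDensity (k : ℕ) (f : ℝ → ℝ) (s : ℝ) : ℝ :=
  s ^ k * radialPrimitive k f s

noncomputable def radialSolution (k : ℕ) (f : ℝ → ℝ) (t : ℝ) : ℝ :=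
  (∫ s in 0..t, radialDensity k f s) - (∫ s in 0..1, radialDensity k f s) * t ^ (k + 1)

section radial

variable {k : ℕ} {δ : ℝ} {f : ℝ → ℝ}

lemma continuousOn_div_pow (hf : ContinuousOn f (Ioi 0)) :
    ContinuousOn (fun r => f r / r ^ (k + 2)) (Ioi 0) :=
  hf.div (continuousOn_pow _) fun _ hr => pow_ne_zero _ (ne_of_gt hr)

lemma hasDerivAt_radialPrimitive (hf : ContinuousOn f (Ioi 0)) {t : ℝ} (ht : 0 < t) :
    HasDerivAt (radialPrimitive k f) (-(f t / t ^ (k + 2))) t := by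
  have hg := continuousOn_div_pow (k := k) hf
  have hsub : uIcc t 1 ⊆ Ioi 0 := fun x hx => (lt_min ht one_pos).trans_le hx.1
  exact integral_hasDerivAt_left (hg.mono hsub).intervalIntegrable
    (hg.stronglyMeasurableAtFilter isOpen_Ioi t ht) (hg.continuousAt (isOpen_Ioi.mem_nhds ht))

lemma contDiffOn_radialPrimitive (hf : ContinuousOn f (Ioi 0)) :
    ContDiffOn ℝ 1 (radialPrimitive k f) (Ioi 0) :=
  contDiffOn_succ_of_hasDerivAt (m := 0) isOpen_Ioi
    (fun _ ht => hasDerivAt_radialPrimitive hf ht)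
    (contDiffOn_zero.2 (continuousOn_div_pow hf).neg)

lemma abs_radialPrimitive_le (hfb : ∀ t ∈ Ioc 0 1, |f t| ≤ t ^ δ) (hδ : δ < k + 1) {t : ℝ}
    (ht : t ∈ Ioc 0 1) : |radialPrimitive k f t| ≤ t ^ (δ - (k + 1)) / (k + 1 - δ) := by
  rw [← neg_sub δ]
  refine abs_integral_le_rpow_of_neg (by linarith) ht.1 ht.2 fun r hr => ?_
  have hr0 : 0 < r := ht.1.trans hr.1
  calc |f r / r ^ (k + 2)| ≤ r ^ δ / r ^ (k + 2) := by
        rw [abs_div, abs_of_pos (pow_pos hr0 _)]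
        exact div_le_div_of_nonneg_right (hfb r ⟨hr0, hr.2⟩) (pow_pos hr0 _).le
    _ = r ^ (δ - (k + 1) - 1) := by
        rw [← Real.rpow_natCast, ← Real.rpow_sub hr0]; push_cast; ring_nf

lemma abs_radialDensity_le (hfb : ∀ t ∈ Ioc 0 1, |f t| ≤ t ^ δ) (hδ : δ < k + 1) {s : ℝ}
    (hs : s ∈ Ioc 0 1) : |radialDensity k f s| ≤ (k + 1 - δ)⁻¹ * s ^ (δ - 1) := by
  calc |radialDensity k f s| ≤ s ^ k * (s ^ (δ - (k + 1)) / (k + 1 - δ)) := by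
        rw [radialDensity, abs_mul, abs_of_pos (pow_pos hs.1 _)]
        exact mul_le_mul_of_nonneg_left (abs_radialPrimitive_le hfb hδ hs) (pow_pos hs.1 _).le
    _ = (k + 1 - δ)⁻¹ * s ^ (δ - 1) := by
        rw [← Real.rpow_natCast, mul_div_assoc', ← Real.rpow_add hs.1, div_eq_inv_mul]; ring_nf

lemma continuousOn_radialDensity (hf : ContinuousOn f (Ioi 0)) :
    ContinuousOn (radialDensity k f) (Ioi 0) :=
  (continuousOn_pow k).mul (contDiffOn_radialPrimitive hf).continuousOn

lemma intervalIntegrable_radialDensity (hf : ContinuousOn f (Ioi 0))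
    (hfb : ∀ t ∈ Ioc 0 1, |f t| ≤ t ^ δ) (hδ0 : 0 < δ) (hδ : δ < k + 1) {t : ℝ} (ht : 0 < t) :
    IntervalIntegrable (radialDensity k f) volume 0 t := by
  have hc := continuousOn_radialDensity (k := k) hf
  refine (intervalIntegrable_of_abs_le_rpow hδ0 zero_le_one (hc.mono Ioc_subset_Ioi_self)
    fun s hs => abs_radialDensity_le hfb hδ hs).trans ?_
  exact (hc.mono fun x hx => (lt_min one_pos ht).trans_le hx.1).intervalIntegrable

lemma hasDerivAt_radialSolution (hf : ContinuousOn f (Ioi 0))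
    (hfb : ∀ t ∈ Ioc 0 1, |f t| ≤ t ^ δ) (hδ0 : 0 < δ) (hδ : δ < k + 1) {t : ℝ} (ht : 0 < t) :
    HasDerivAt (radialSolution k f)
      (t ^ k * (radialPrimitive k f t - (k + 1) * ∫ s in 0..1, radialDensity k f s)) t := by
  have hc := continuousOn_radialDensity (k := k) hf
  have hint := integral_hasDerivAt_right (intervalIntegrable_radialDensity hf hfb hδ0 hδ ht)
    (hc.stronglyMeasurableAtFilter isOpen_Ioi t ht) (hc.continuousAt (isOpen_Ioi.mem_nhds ht))
  refine (hint.sub ((hasDerivAt_pow (k + 1) t).const_mul _)).congr_deriv ?_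
  rw [radialDensity]; push_cast; ring

lemma radialSolution_ode (hf : ContinuousOn f (Ioi 0))
    (hfb : ∀ t ∈ Ioc 0 1, |f t| ≤ t ^ δ) (hδ0 : 0 < δ) (hδ : δ < k + 1) {t : ℝ} (ht : 0 < t) :
    -t ^ 2 * deriv (deriv (radialSolution k f)) t + k * t * deriv (radialSolution k f) t = f t := by
  rw [neg_sq_mul_deriv_deriv_add_eq k
    (eventually_of_mem (Ioi_mem_nhds ht) fun x hx => hasDerivAt_radialSolution hf hfb hδ0 hδ hx)
    ((hasDerivAt_radialPrimitive hf ht).sub_const _)]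
  field_simp

lemma contDiffOn_radialSolution (hf : ContinuousOn f (Ioi 0))
    (hfb : ∀ t ∈ Ioc 0 1, |f t| ≤ t ^ δ) (hδ0 : 0 < δ) (hδ : δ < k + 1) :
    ContDiffOn ℝ 2 (radialSolution k f) (Ioi 0) :=
  contDiffOn_succ_of_hasDerivAt (m := 1) isOpen_Ioi
    (fun _ ht => hasDerivAt_radialSolution hf hfb hδ0 hδ ht)
    ((contDiffOn_id.pow k).mul ((contDiffOn_radialPrimitive hf).sub contDiffOn_const))

lemma abs_radialSolution_le (hfb : ∀ t ∈ Ioc 0 1, |f t| ≤ t ^ δ) (hδ0 : 0 < δ) (hδ : δ < k + 1)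
    {t : ℝ} (ht : t ∈ Ioc 0 1) :
    |radialSolution k f t| ≤ 2 / (δ * (k + 1 - δ)) * t ^ δ := by
  have hb : ∀ x, 0 ≤ x → x ≤ 1 →
      |∫ s in 0..x, radialDensity k f s| ≤ (k + 1 - δ)⁻¹ * x ^ δ / δ := fun x hx hx1 =>
    abs_integral_le_rpow_of_pos hδ0 hx fun s hs =>
      abs_radialDensity_le hfb hδ ⟨hs.1, hs.2.trans hx1⟩
  have htk : t ^ (k + 1) ≤ t ^ δ := by
    rw [← Real.rpow_natCast]
    exact Real.rpow_le_rpow_of_exponent_ge ht.1 ht.2 (by push_cast; linarith)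
  calc |radialSolution k f t|
      ≤ |∫ s in 0..t, radialDensity k f s|
          + |∫ s in 0..1, radialDensity k f s| * t ^ (k + 1) := by
        rw [← abs_of_pos (pow_pos ht.1 (k + 1)), ← abs_mul]; exact abs_sub _ _
    _ ≤ (k + 1 - δ)⁻¹ * t ^ δ / δ + (k + 1 - δ)⁻¹ * 1 ^ δ / δ * t ^ δ :=
        add_le_add (hb t ht.1.le ht.2) (mul_le_mul (hb 1 zero_le_one le_rfl) htk
          (pow_pos ht.1 _).le (by positivity))
    _ = 2 / (δ * (k + 1 - δ)) * t ^ δ := by rw [Real.one_rpow]; field_simp; ring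

end radial

lemma radialSolution_one (k : ℕ) (f : ℝ → ℝ) : radialSolution k f 1 = 0 := by
  simp [radialSolution]

/-- For any weight δ in the Fredholm window (0,n) there is a constant
C > 0, depending only on n and δ, such that for every continuous f on (0,1] with
|f(t)| ≤ t^δ there is a C² solution u of −t²u'' + (n−1)t u' = f on (0,1) with u(1) = 0
and |u(t)| ≤ C·t^δ on (0,1]. -/
theorem stmt4 (n : ℕ) (hn : 1 ≤ n) (δ : ℝ) (hδ0 : 0 < δ) (hδn : δ < n) :
    ∃ C : ℝ, 0 < C ∧
      ∀ f : ℝ → ℝ, ContinuousOn f (Set.Ioc (0 : ℝ) 1) →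
        (∀ t ∈ Set.Ioc (0 : ℝ) 1, |f t| ≤ t ^ δ) →
        ∃ u : ℝ → ℝ,
          ContDiffOn ℝ 2 u (Set.Ioc (0 : ℝ) 1) ∧
          u 1 = 0 ∧
          (∀ t ∈ Set.Ioo (0 : ℝ) 1,
            -t ^ 2 * deriv (deriv u) t + ((n : ℝ) - 1) * t * deriv u t = f t) ∧
          (∀ t ∈ Set.Ioc (0 : ℝ) 1, |u t| ≤ C * t ^ δ) := by
  obtain ⟨k, rfl⟩ := Nat.exists_eq_add_of_le' hn
  have hδk : δ < k + 1 := by exact_mod_cast hδn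
  refine ⟨2 / (δ * (k + 1 - δ)), by positivity, fun f hf hfb => ?_⟩
  -- Extending `f` by `f 1` past `1` makes the solution `C²` on an open set containing `1`.
  have hext : ∀ t ∈ Ioc (0 : ℝ) 1, f (min t 1) = f t := fun t ht => by rw [min_eq_left ht.2]
  have hfb' : ∀ t ∈ Ioc (0 : ℝ) 1, |f (min t 1)| ≤ t ^ δ := fun t ht => hext t ht ▸ hfb t ht
  have hf' := hf.comp_min_right one_pos
  refine ⟨radialSolution k fun t => f (min t 1),
    (contDiffOn_radialSolution hf' hfb' hδ0 hδk).mono Ioc_subset_Ioi_self,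
    radialSolution_one _ _, fun t ht => ?_, fun t ht => abs_radialSolution_le hfb' hδ0 hδk ht⟩
  rw [← hext t (Ioo_subset_Ioc_self ht), ← radialSolution_ode hf' hfb' hδ0 hδk ht.1]
  push_cast; ring
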